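/- arXiv:1904.04921 — 4 statements merged into one kernel-verified Lean document; each statement's English description precedes it below -/
import Mathlib

section
/- (Skew version of Bollobás's theorem) If A_1,...,A_h are r-element sets and B_1,...,B_h are s-element sets such that A_i ∩ B_i = ∅ for all i, and A_i ∩ B_j ≠ ∅ whenever i < j, then h ≤ C(r+s, r). -/
open ExteriorAlgebra Module Matrix

set_option maxHeartbeats 1000000

private lemma fin_comp_append {β γ : Type*} {m k : ℕ} (g : β → γ) (u : Fin m → β)
    (w : Fin k → β) : g ∘ Fin.append u w = Fin.append (g ∘ u) (g ∘ w) := by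
  funext i
  induction i using Fin.addCases <;>
    simp [Fin.append_left, Fin.append_right]

private lemma iotaMulti_mul {R M : Type*} [CommRing R] [AddCommGroup M] [Module R M]
    {m k : ℕ} (u : Fin m → M) (w : Fin k → M) :
    ιMulti R m u * ιMulti R k w = ιMulti R (m + k) (Fin.append u w) := by
  rw [ιMulti_apply, ιMulti_apply, ιMulti_apply, ← List.prod_append, ← List.ofFn_fin_append]
  congr 1
  have : (fun i => ι R (Fin.append u w i)) = Fin.append (fun i => ι R (u i)) (fun i => ι R (w i)) :=
    fin_comp_append (ι R) u w
  rw [this]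

/-- Every value of `ιMulti` lies in the span of the `ιMulti` of sorted basis tuples. -/
private lemma iotaMulti_mem_span {n m : ℕ} (w : Fin m → (Fin n → ℝ)) :
    ιMulti ℝ m w ∈ Submodule.span ℝ (Set.range (fun S : {S : Finset (Fin n) // S.card = m} =>
      ιMulti ℝ m (fun k => Pi.basisFun ℝ (Fin n) (S.1.orderEmbOfFin S.2 k)))) := by
  classical
  set e := Pi.basisFun ℝ (Fin n)
  set G := fun S : {S : Finset (Fin n) // S.card = m} =>
      ιMulti ℝ m (fun k => e (S.1.orderEmbOfFin S.2 k))
  set W := Submodule.span ℝ (Set.range G)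
  have hbasic : ∀ p : Fin m → Fin n, ιMulti ℝ m (fun k => e (p k)) ∈ W := by
    intro p
    by_cases hp : Function.Injective p
    · set S : Finset (Fin n) := Finset.image p Finset.univ with hS
      have hcard : S.card = m := by
        rw [hS, Finset.card_image_of_injective _ hp, Finset.card_univ, Fintype.card_fin]
      set σ := Tuple.sort p with hσ
      have hmono : Monotone (p ∘ σ) := Tuple.monotone_sort p
      have hinj : Function.Injective (p ∘ σ) := hp.comp σ.injective
      have hsm : StrictMono (p ∘ σ) := hmono.strictMono_of_injective hinj
      have hq : (p ∘ σ) = S.orderEmbOfFin hcard := by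
        refine Finset.orderEmbOfFin_unique hcard (fun x => ?_) hsm
        exact Finset.mem_image.2 ⟨σ x, Finset.mem_univ _, rfl⟩
      have hpe : (fun k => e (p k)) = (fun k => e ((p ∘ σ) k)) ∘ σ.symm := by
        funext k
        simp [Function.comp]
      have hGeq : G ⟨S, hcard⟩ = ιMulti ℝ m (fun k => e ((p ∘ σ) k)) :=
        DFunLike.congr_arg (ιMulti ℝ m) (funext fun k => congrArg e (congrFun hq k).symm)
      rw [hpe, AlternatingMap.map_perm, ← hGeq]
      exact Submodule.smul_of_tower_mem _ _ (Submodule.subset_span ⟨⟨S, hcard⟩, rfl⟩)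
    · rw [Function.not_injective_iff] at hp
      obtain ⟨k, l, hkl, hne⟩ := hp
      have : ιMulti ℝ m (fun k => e (p k)) = 0 :=
        AlternatingMap.map_eq_zero_of_eq _ _ (by rw [hkl]) hne
      rw [this]; exact Submodule.zero_mem _
  have hw : w = fun k => ∑ j : Fin n, w k j • e j := by
    funext k
    have := (Pi.basisFun ℝ (Fin n)).sum_repr (w k)
    simp only [Pi.basisFun_repr] at this
    exact this.symm
  have h1 : ιMulti ℝ m w
      = ∑ p : Fin m → Fin n, (∏ k, w k (p k)) • ιMulti ℝ m (fun k => e (p k)) := by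
    conv_lhs => rw [hw]
    rw [show ((ιMulti ℝ m) (fun k => ∑ j : Fin n, w k j • e j))
        = (ιMulti ℝ m).toMultilinearMap (fun k => ∑ j : Fin n, w k j • e j) from rfl,
      MultilinearMap.map_sum]
    refine Finset.sum_congr rfl (fun p _ => ?_)
    exact MultilinearMap.map_smul_univ _ _ _
  rw [h1]
  exact Submodule.sum_mem _ fun p _ => Submodule.smul_mem _ _ (hbasic p)

/-- Skew version of Bollobás's theorem. -/
theorem skew_bollobas {α : Type*} [DecidableEq α] (h r s : ℕ)
    (A B : Fin h → Finset α)
    (hA : ∀ i, (A i).card = r) (hB : ∀ i, (B i).card = s)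
    (hdisj : ∀ i, A i ∩ B i = ∅)
    (hskew : ∀ i j, i < j → (A i ∩ B j).Nonempty) :
    h ≤ (r + s).choose r := by
  classical
  set n := r + s with hn
  set e := Pi.basisFun ℝ (Fin n) with he
  -- an injective-on-the-relevant-set real labeling
  set U : Finset α := Finset.univ.biUnion (fun i : Fin h => A i ∪ B i) with hU
  set t : α → ℝ := fun x => if hx : x ∈ U then ((U.equivFin ⟨x, hx⟩ : ℕ) : ℝ) else 0 with ht
  have htinj : Set.InjOn t U := by
    intro x hx y hy hxy
    have hx' : x ∈ U := hx
    have hy' : y ∈ U := hy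
    rw [ht] at hxy
    simp only [dif_pos hx', dif_pos hy', Nat.cast_inj, Fin.val_eq_val] at hxy
    have := U.equivFin.injective hxy
    exact Subtype.ext_iff.1 this
  -- Vandermonde vectors
  set v : α → (Fin n → ℝ) := fun x m => t x ^ (m : ℕ) with hv
  -- enumerations of the sets A i and B j
  set fA : ∀ i : Fin h, Fin r → α := fun i k => ((A i).equivFin.symm (Fin.cast (hA i).symm k) : α)
    with hfA
  set gB : ∀ j : Fin h, Fin s → α := fun j k => ((B j).equivFin.symm (Fin.cast (hB j).symm k) : α)
    with hgB
  have hfA_mem : ∀ i k, fA i k ∈ A i := fun i k => ((A i).equivFin.symm _).2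
  have hgB_mem : ∀ j k, gB j k ∈ B j := fun j k => ((B j).equivFin.symm _).2
  have hfA_inj : ∀ i, Function.Injective (fA i) := by
    intro i x y hxy
    have := (A i).equivFin.symm.injective (Subtype.ext hxy)
    simpa [Fin.ext_iff] using congrArg Fin.val this
  have hgB_inj : ∀ j, Function.Injective (gB j) := by
    intro j x y hxy
    have := (B j).equivFin.symm.injective (Subtype.ext hxy)
    simpa [Fin.ext_iff] using congrArg Fin.val this
  have hfA_surj : ∀ i, ∀ x ∈ A i, ∃ k, fA i k = x := by
    intro i x hx
    exact ⟨Fin.cast (hA i) ((A i).equivFin ⟨x, hx⟩), by simp [hfA]⟩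
  have hgB_surj : ∀ j, ∀ x ∈ B j, ∃ k, gB j k = x := by
    intro j x hx
    exact ⟨Fin.cast (hB j) ((B j).equivFin ⟨x, hx⟩), by simp [hgB]⟩
  -- the wedge products
  set a : Fin h → ExteriorAlgebra ℝ (Fin n → ℝ) := fun i => ιMulti ℝ r (v ∘ fA i) with ha
  set b : Fin h → ExteriorAlgebra ℝ (Fin n → ℝ) := fun j => ιMulti ℝ s (v ∘ gB j) with hb
  -- the functionals
  set F : ∀ m : ℕ, (Fin n → ℝ) [⋀^Fin m]→ₗ[ℝ] ℝ :=
    Function.update (fun m => (0 : (Fin n → ℝ) [⋀^Fin m]→ₗ[ℝ] ℝ)) n e.det with hF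
  set ψ : Fin h → ExteriorAlgebra ℝ (Fin n → ℝ) →ₗ[ℝ] ℝ :=
    fun j => (liftAlternating F).comp (LinearMap.mulRight ℝ (b j)) with hψ
  have hψ_eval : ∀ i j, ψ j (a i) = e.det (v ∘ Fin.append (fA i) (gB j)) := by
    intro i j
    have h1 : a i * b j = ιMulti ℝ n (v ∘ Fin.append (fA i) (gB j)) := by
      rw [ha, hb]
      rw [iotaMulti_mul, fin_comp_append]
    calc ψ j (a i) = liftAlternating F (a i * b j) := rfl
      _ = F n (v ∘ Fin.append (fA i) (gB j)) := by rw [h1, liftAlternating_apply_ιMulti]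
      _ = e.det (v ∘ Fin.append (fA i) (gB j)) := by rw [hF, Function.update_self]
  -- skew vanishing
  have hψ_skew : ∀ i j, i < j → ψ j (a i) = 0 := by
    intro i j hij
    obtain ⟨x, hx⟩ := hskew i j hij
    rw [Finset.mem_inter] at hx
    obtain ⟨k, hk⟩ := hfA_surj i x hx.1
    obtain ⟨l, hl⟩ := hgB_surj j x hx.2
    rw [hψ_eval]
    refine AlternatingMap.map_eq_zero_of_eq _ _
      (i := Fin.castAdd s k) (j := Fin.natAdd r l) ?_ ?_
    · simp only [Function.comp_apply, Fin.append_left, Fin.append_right, hk, hl]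
    · intro hcontr
      have := congrArg Fin.val hcontr
      simp only [Fin.coe_castAdd, Fin.coe_natAdd] at this
      omega
  -- diagonal nonvanishing
  have hψ_diag : ∀ i, ψ i (a i) ≠ 0 := by
    intro i
    rw [hψ_eval]
    set c : Fin n → α := Fin.append (fA i) (gB i) with hc
    have hcU : ∀ k, c k ∈ U := by
      intro k
      have : c k ∈ A i ∪ B i := by
        induction k using Fin.addCases with
        | left k => simpa [hc, Fin.append_left] using Finset.mem_union_left _ (hfA_mem i k)
        | right k => simpa [hc, Fin.append_right] using Finset.mem_union_right _ (hgB_mem i k)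
      exact Finset.mem_biUnion.2 ⟨i, Finset.mem_univ _, this⟩
    have hcinj : Function.Injective c := by
      intro k l hkl
      induction k using Fin.addCases with
      | left k =>
        induction l using Fin.addCases with
        | left l =>
          rw [hc, Fin.append_left, Fin.append_left] at hkl
          rw [hfA_inj i hkl]
        | right l =>
          rw [hc, Fin.append_left, Fin.append_right] at hkl
          exfalso
          have : fA i k ∈ A i ∩ B i := Finset.mem_inter.2 ⟨hfA_mem i k, hkl ▸ hgB_mem i l⟩
          simp [hdisj i] at this
      | right k =>
        induction l using Fin.addCases with
        | left l =>
          rw [hc, Fin.append_right, Fin.append_left] at hkl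
          exfalso
          have : fA i l ∈ A i ∩ B i := Finset.mem_inter.2 ⟨hfA_mem i l, hkl ▸ hgB_mem i k⟩
          simp [hdisj i] at this
        | right l =>
          rw [hc, Fin.append_right, Fin.append_right] at hkl
          rw [hgB_inj i hkl]
    have htc : Function.Injective (fun k => t (c k)) := by
      intro k l hkl
      exact hcinj (htinj (hcU k) (hcU l) hkl)
    -- Vandermonde determinant
    have hmat : e.toMatrix (v ∘ c) = (Matrix.vandermonde (fun k => t (c k)))ᵀ := by
      ext p q
      simp [Basis.toMatrix_apply, he, Pi.basisFun_repr, hv, Matrix.vandermonde_apply,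
        Matrix.transpose_apply]
    rw [Basis.det_apply, hmat, Matrix.det_transpose, Matrix.det_vandermonde]
    refine Finset.prod_ne_zero_iff.2 (fun p _ => Finset.prod_ne_zero_iff.2 (fun q hq => ?_))
    rw [Finset.mem_Ioi] at hq
    refine sub_ne_zero_of_ne (fun hEq => ?_)
    exact (ne_of_gt hq) (htc hEq)
  -- linear independence of the a i in the exterior algebra
  have hlin : LinearIndependent ℝ a := by
    rw [Fintype.linearIndependent_iff]
    intro c hc
    have hsum : ∀ j : Fin h, ∑ i : Fin h, c i • ψ j (a i) = 0 := by
      intro j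
      have := congrArg (ψ j) hc
      rw [map_sum, map_zero] at this
      simpa using this
    have key : ∀ j : Fin h, (∀ k, j < k → c k = 0) → c j = 0 := by
      intro j hjk
      have := hsum j
      rw [Finset.sum_eq_single j] at this
      · have hd := hψ_diag j
        rcases smul_eq_zero.1 this with h0 | h0
        · exact h0
        · exact absurd h0 hd
      · intro i _ hij
        rcases lt_or_gt_of_ne hij with hlt | hgt
        · rw [hψ_skew i j hlt, smul_zero]
        · rw [hjk i hgt, zero_smul]
      · intro hj; exact absurd (Finset.mem_univ j) hj
    intro i
    by_contra hci
    set T : Finset (Fin h) := Finset.univ.filter (fun k => c k ≠ 0) with hT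
    have hTne : T.Nonempty := ⟨i, by simp [hT, hci]⟩
    set j := T.max' hTne with hj
    have hjT : j ∈ T := T.max'_mem hTne
    have : c j = 0 := by
      refine key j (fun k hk => ?_)
      by_contra hck
      have : k ∈ T := by simp [hT, hck]
      exact absurd (T.le_max' k this) (not_le_of_gt hk)
    rw [hT] at hjT
    simp [this] at hjT
  -- now bound by the dimension of the span of sorted wedges
  set G := fun S : {S : Finset (Fin n) // S.card = r} =>
      ιMulti ℝ r (fun k => e (S.1.orderEmbOfFin S.2 k)) with hG
  set W := Submodule.span ℝ (Set.range G) with hW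
  have hmem : ∀ i, a i ∈ W := fun i => iotaMulti_mem_span (v ∘ fA i)
  set a' : Fin h → W := fun i => ⟨a i, hmem i⟩ with ha'
  have hlin' : LinearIndependent ℝ a' := by
    apply LinearIndependent.of_comp W.subtype
    exact hlin
  haveI : Module.Finite ℝ W := FiniteDimensional.span_of_finite ℝ (Set.finite_range G)
  have hcard := hlin'.fintype_card_le_finrank
  rw [Fintype.card_fin] at hcard
  refine hcard.trans ?_
  have h1 : finrank ℝ W ≤ Fintype.card {S : Finset (Fin n) // S.card = r} := by
    haveI : Fintype (Set.range G) := Set.fintypeRange G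
    refine (finrank_span_le_card (Set.range G)).trans ?_
    rw [Set.toFinset_range]
    exact (Finset.card_image_le).trans (by simp)
  refine h1.trans ?_
  rw [Fintype.card_finset_len, Fintype.card_fin]
end

section
/- (Bollobás's theorem, symmetric version) If A_1,...,A_h are r-element sets and B_1,...,B_h are s-element sets such that A_i ∩ B_j = ∅ if and only if i = j, then h ≤ C(r+s, r). -/
/-!
The theorem is the uniform case of Bollobás's inequality `∑ᵢ 1 / C(|Aᵢ| + |Bᵢ|, |Aᵢ|) ≤ 1`, which
holds by induction on a ground set `X` containing all the sets. For `x ∈ X`, the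
pairs `(Aᵢ, Bᵢ \ {x})` with `x ∉ Aᵢ` form a family of the same kind on `X \ {x}`. Summing the induction
hypothesis over `x ∈ X` and exchanging the sums, the pair `i` contributes
`(|X| - aᵢ - bᵢ) / C(aᵢ + bᵢ, aᵢ) + bᵢ / C(aᵢ + bᵢ - 1, aᵢ) = |X| / C(aᵢ + bᵢ, aᵢ)`, so `|X|` times
the sum is at most `|X|`. A pair with `Bᵢ = ∅` meets no other `Aⱼ`, so it is then alone.
-/

open Finset

section

variable {ι α : Type*}

def bollobasWeight (A B : Finset α) : ℚ := ((#A + #B).choose #A : ℚ)⁻¹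

lemma bollobasWeight_le_one (A B : Finset α) : bollobasWeight A B ≤ 1 :=
  inv_le_one_of_one_le₀ <| by exact_mod_cast Nat.choose_pos (Nat.le_add_right _ _)

lemma sum_bollobasWeight_le_one_of_card_le_one {s : Finset ι} {A B : ι → Finset α}
    (hs : #s ≤ 1) : ∑ i ∈ s, bollobasWeight (A i) (B i) ≤ 1 :=
  calc ∑ i ∈ s, bollobasWeight (A i) (B i) ≤ ∑ _i ∈ s, (1 : ℚ) :=
        sum_le_sum fun i _ => bollobasWeight_le_one _ _
    _ ≤ 1 := by simpa using hs

variable [DecidableEq α]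

lemma sum_sdiff_bollobasWeight_erase {A B X : Finset α} (hAB : Disjoint A B) (hX : A ∪ B ⊆ X)
    (hB : B.Nonempty) :
    ∑ x ∈ X \ A, bollobasWeight A (B.erase x) = #X * bollobasWeight A B := by
  have hBX : B ⊆ X \ A := subset_sdiff.2 ⟨subset_union_right.trans hX, hAB.symm⟩
  obtain ⟨b, hb⟩ : ∃ b, #B = b + 1 := Nat.exists_eq_add_one.2 hB.card_pos
  have hX_card : #((X \ A) \ B) + (b + 1) + #A = #X := by
    rw [← hb, card_sdiff_add_card_eq_card hBX,
      card_sdiff_add_card_eq_card (subset_union_left.trans hX)]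
  have hchoose :
      ((#A + b).choose #A : ℚ) * (#A + b + 1) = (#A + (b + 1)).choose #A * (b + 1) := by
    have := Nat.choose_mul_succ_eq (#A + b) #A
    rw [show #A + b + 1 - #A = b + 1 by omega, add_assoc] at this
    exact_mod_cast this
  have hpos : (0 : ℚ) < (#A + b).choose #A := by exact_mod_cast Nat.choose_pos (by omega)
  have hpos' : (0 : ℚ) < (#A + (b + 1)).choose #A := by exact_mod_cast Nat.choose_pos (by omega)
  have h_outside : ∀ x ∈ (X \ A) \ B, bollobasWeight A (B.erase x) = bollobasWeight A B :=
    fun x hx => by rw [erase_eq_of_notMem (mem_sdiff.1 hx).2]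
  have h_inside : ∀ x ∈ B, bollobasWeight A (B.erase x) = ((#A + b).choose #A : ℚ)⁻¹ :=
    fun x hx => by rw [bollobasWeight, card_erase_of_mem hx, hb, Nat.add_sub_cancel]
  rw [← sdiff_union_of_subset hBX, sum_union sdiff_disjoint, sum_congr rfl h_outside,
    sum_congr rfl h_inside]
  simp only [sum_const, nsmul_eq_mul, bollobasWeight, hb, ← hX_card]
  push_cast
  field_simp
  linear_combination -hchoose

structure IsBollobasSystem (s : Finset ι) (A B : ι → Finset α) : Prop where
  disjoint : ∀ i ∈ s, Disjoint (A i) (B i)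
  inter_nonempty : ∀ i ∈ s, ∀ j ∈ s, i ≠ j → (A i ∩ B j).Nonempty

namespace IsBollobasSystem

variable {s : Finset ι} {A B : ι → Finset α}

lemma card_le_one_of_eq_empty (hS : IsBollobasSystem s A B) {i : ι} (hi : i ∈ s)
    (hBi : B i = ∅) : #s ≤ 1 :=
  have hs : s ⊆ {i} := fun j hj => mem_singleton.2 <| by_contra fun hji => by
    simpa [hBi] using hS.inter_nonempty j hj i hi hji
  (card_le_card hs).trans (card_singleton i).le

lemma restrict (hS : IsBollobasSystem s A B) (x : α) :
    IsBollobasSystem {i ∈ s | x ∉ A i} A fun i => (B i).erase x where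
  disjoint i hi := (hS.disjoint i (mem_filter.1 hi).1).mono_right (erase_subset _ _)
  inter_nonempty i hi j hj hij := by
    obtain ⟨y, hy⟩ := hS.inter_nonempty i (mem_filter.1 hi).1 j (mem_filter.1 hj).1 hij
    have hyx : y ≠ x := ne_of_mem_of_not_mem (mem_inter.1 hy).1 (mem_filter.1 hi).2
    exact ⟨y, mem_inter.2 ⟨(mem_inter.1 hy).1, mem_erase.2 ⟨hyx, (mem_inter.1 hy).2⟩⟩⟩

theorem sum_bollobasWeight_le_one_of_subset (hS : IsBollobasSystem s A B) (X : Finset α)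
    (hX : ∀ i ∈ s, A i ∪ B i ⊆ X) : ∑ i ∈ s, bollobasWeight (A i) (B i) ≤ 1 := by
  induction X using Finset.strongInduction generalizing s B with
  | H X ih =>
  by_cases h_empty : ∃ i ∈ s, B i = ∅
  · obtain ⟨i, hi, hBi⟩ := h_empty
    exact sum_bollobasWeight_le_one_of_card_le_one (hS.card_le_one_of_eq_empty hi hBi)
  push Not at h_empty
  obtain rfl | ⟨i₀, hi₀⟩ := s.eq_empty_or_nonempty
  · simp
  have hX_pos : (0 : ℚ) < #X := by
    have hX_nonempty := (h_empty i₀ hi₀).mono (subset_union_right.trans (hX i₀ hi₀))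
    exact_mod_cast hX_nonempty.card_pos
  have h_restrict (x : α) (hx : x ∈ X) :
      ∑ i ∈ s with x ∉ A i, bollobasWeight (A i) ((B i).erase x) ≤ 1 := by
    refine ih (X.erase x) (erase_ssubset hx) (hS.restrict x) fun i hi => ?_
    rw [← erase_eq_of_notMem (mem_filter.1 hi).2, ← erase_union_distrib]
    exact erase_subset_erase x (hX i (mem_filter.1 hi).1)
  refine le_of_mul_le_mul_left ?_ hX_pos
  calc (#X : ℚ) * ∑ i ∈ s, bollobasWeight (A i) (B i)
      = ∑ i ∈ s, ∑ x ∈ X \ A i, bollobasWeight (A i) ((B i).erase x) := by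
        rw [mul_sum]
        exact sum_congr rfl fun i hi =>
          (sum_sdiff_bollobasWeight_erase (hS.disjoint i hi) (hX i hi) (h_empty i hi)).symm
    _ = ∑ x ∈ X, ∑ i ∈ s with x ∉ A i, bollobasWeight (A i) ((B i).erase x) :=
        sum_comm' fun i x => by simp only [mem_sdiff, mem_filter]; tauto
    _ ≤ ∑ _x ∈ X, 1 := sum_le_sum h_restrict
    _ = #X * 1 := by simp

theorem sum_bollobasWeight_le_one (hS : IsBollobasSystem s A B) :
    ∑ i ∈ s, bollobasWeight (A i) (B i) ≤ 1 :=
  hS.sum_bollobasWeight_le_one_of_subset (s.biUnion fun i => A i ∪ B i)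
    fun _ hi => subset_biUnion_of_mem (fun i => A i ∪ B i) hi

end IsBollobasSystem

end

/-- Bollobás's theorem, symmetric version. -/
theorem bollobas_symmetric {α : Type*} [DecidableEq α] (h r s : ℕ)
    (A B : Fin h → Finset α)
    (hA : ∀ i, (A i).card = r) (hB : ∀ i, (B i).card = s)
    (hiff : ∀ i j, A i ∩ B j = ∅ ↔ i = j) :
    h ≤ (r + s).choose r := by
  have hS : IsBollobasSystem univ A B :=
    ⟨fun i _ => disjoint_iff_inter_eq_empty.2 ((hiff i i).2 rfl),
      fun i _ j _ hij => nonempty_iff_ne_empty.2 (mt (hiff i j).1 hij)⟩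
  have h_sum := hS.sum_bollobasWeight_le_one
  simp only [bollobasWeight, hA, hB, sum_const, card_univ, Fintype.card_fin, nsmul_eq_mul,
    ← div_eq_mul_inv] at h_sum
  have hpos : (0 : ℚ) < (r + s).choose r := by
    exact_mod_cast Nat.choose_pos (Nat.le_add_right _ _)
  exact_mod_cast (div_le_one hpos).1 h_sum
end

section
/- Suppose {(A_i, B_i)}_{i=1}^h is a system where each A_i is a 2-element set, each B_i is an m-element set, A_i ∩ B_i = ∅ for all i, and A_i ∩ B_j ≠ ∅ for all i < j. Then h ≤ (m+2)(m+1)/2. -/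
/-!
Label the ground elements injectively by rationals, write `A i = {p i, q i}`, and let `P j` be
the degree-`m` polynomial vanishing exactly at the labels of `B j`. Then
`P j (p i) * P j (q i) = 0` iff `A i` meets `B j`, so this matrix is triangular with nonzero
diagonal. Expanding `P(x) P(y)` in the coefficients of `P` turns it into a linear functional
applied to a vector indexed by unordered pairs of exponents in `{0, …, m}`, so these vectors are
linearly independent in a space of dimension `(m + 2).choose 2`.
-/

open Polynomial Finset

theorem Finset.exists_injOn_of_charZero {α : Type*} [DecidableEq α] (K : Type*)
    [AddMonoidWithOne K] [CharZero K] (s : Finset α) : ∃ t : α → K, Set.InjOn t s :=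
  ⟨fun x => (s.toList.idxOf x : K), fun _ hx _ _ hxy =>
    (List.idxOf_inj (mem_toList.mpr hx)).mp (Nat.cast_injective hxy)⟩

theorem linearIndependent_of_triangular {ι R M : Type*} [LinearOrder ι] [CommRing R]
    [NoZeroDivisors R] [AddCommGroup M] [Module R M] (v : ι → M) (f : ι → M →ₗ[R] R)
    (hlt : ∀ i j, i < j → f j (v i) = 0) (hdiag : ∀ i, f i (v i) ≠ 0) :
    LinearIndependent R v := by
  classical
  rw [linearIndependent_iff']
  intro s g hsum i hi
  by_contra hgi
  set supp := s.filter (g · ≠ 0)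
  have hne : supp.Nonempty := ⟨i, mem_filter.mpr ⟨hi, hgi⟩⟩
  obtain ⟨hjs, hgj⟩ := mem_filter.mp (supp.max'_mem hne)
  set j := supp.max' hne
  have hother : ∀ k ∈ s, k ≠ j → g k * f j (v k) = 0 := by
    intro k hk hkj
    rcases hkj.lt_or_gt with hlt' | hgt
    · rw [hlt k j hlt', mul_zero]
    · have : g k = 0 := by
        by_contra hgk
        exact (supp.le_max' k (mem_filter.mpr ⟨hk, hgk⟩)).not_gt hgt
      rw [this, zero_mul]
  have hfj := congrArg (f j) hsum
  simp only [map_sum, map_smul, smul_eq_mul, map_zero] at hfj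
  rw [sum_eq_single_of_mem j hjs hother] at hfj
  exact mul_ne_zero hgj (hdiag j) hfj

theorem Polynomial.eval_prod_X_sub_C_eq_zero_iff_of_injOn {ι R : Type*} [CommRing R]
    [IsDomain R] {t : ι → R} {s S : Finset ι} (ht : Set.InjOn t S) (hs : s ⊆ S) {z : ι}
    (hz : z ∈ S) : (∏ y ∈ s, (X - C (t y))).eval (t z) = 0 ↔ z ∈ s := by
  simp only [eval_prod, eval_sub, eval_X, eval_C, prod_eq_zero_iff, sub_eq_zero]
  exact ⟨fun ⟨y, hy, hzy⟩ => ht hz (hs hy) hzy ▸ hy, fun hzs => ⟨z, hzs, rfl⟩⟩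

section SymmetricMonomials

variable {K : Type*} [Field K] (m : ℕ)

/-- The coordinates of the symmetrised tensor `u(x) ⊗ u(y) + u(y) ⊗ u(x)`, where
`u(x) = (1, x, …, x ^ m)`. -/
def symmMonomialVec (x y : K) : Sym2 (Fin (m + 1)) → K :=
  Sym2.lift ⟨fun a b => x ^ (a : ℕ) * y ^ (b : ℕ) + x ^ (b : ℕ) * y ^ (a : ℕ),
    fun _ _ => add_comm _ _⟩

def coeffPairing (P : K[X]) : (Sym2 (Fin (m + 1)) → K) →ₗ[K] K :=
  ∑ a : Fin (m + 1), ∑ b : Fin (m + 1), (P.coeff a * P.coeff b) • LinearMap.proj s(a, b)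

theorem coeffPairing_symmMonomialVec {P : K[X]} (hP : P.natDegree ≤ m) (x y : K) :
    coeffPairing m P (symmMonomialVec m x y) = 2 * (P.eval x * P.eval y) := by
  have heval : ∀ z, P.eval z = ∑ a : Fin (m + 1), P.coeff a * z ^ (a : ℕ) := fun z => by
    rw [eval_eq_sum_range' (Nat.lt_succ_of_le hP), ← Fin.sum_univ_eq_sum_range]
  have hprod : ∀ z w, P.eval z * P.eval w = ∑ a : Fin (m + 1), ∑ b : Fin (m + 1),
      P.coeff a * P.coeff b * (z ^ (a : ℕ) * w ^ (b : ℕ)) := fun z w => by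
    rw [heval, heval, sum_mul_sum]
    exact sum_congr rfl fun _ _ => sum_congr rfl fun _ _ => by ring
  simp only [coeffPairing, LinearMap.sum_apply, LinearMap.smul_apply,
    LinearMap.proj_apply, smul_eq_mul, symmMonomialVec, Sym2.lift_mk, mul_add, sum_add_distrib]
  rw [two_mul, hprod]
  congr 1
  rw [sum_comm]
  exact sum_congr rfl fun _ _ => sum_congr rfl fun _ _ => by ring

end SymmetricMonomials

theorem card_le_choose_two_of_eval_mul_eval_triangular {ι K : Type*} [LinearOrder ι]
    [Fintype ι] [Field K] [CharZero K] {m : ℕ} (x y : ι → K) (P : ι → K[X])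
    (hdeg : ∀ j, (P j).natDegree ≤ m)
    (hlt : ∀ i j, i < j → (P j).eval (x i) * (P j).eval (y i) = 0)
    (hdiag : ∀ i, (P i).eval (x i) * (P i).eval (y i) ≠ 0) :
    Fintype.card ι ≤ (m + 2).choose 2 := by
  have hli : LinearIndependent K fun i => symmMonomialVec m (x i) (y i) :=
    linearIndependent_of_triangular _ (fun j => coeffPairing m (P j))
      (fun i j hij => by simp [coeffPairing_symmMonomialVec m (hdeg j), hlt i j hij])
      (fun i => by simp [coeffPairing_symmMonomialVec m (hdeg i), hdiag i])
  simpa [Module.finrank_fintype_fun_eq_card, Sym2.card] using hli.fintype_card_le_finrank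

/-- Skew Bollobás bound for (2,m)-systems. -/
theorem skew_two_m_system {α : Type*} [DecidableEq α] (h m : ℕ)
    (A B : Fin h → Finset α)
    (hA : ∀ i, (A i).card = 2) (hB : ∀ i, (B i).card = m)
    (hdisj : ∀ i, A i ∩ B i = ∅)
    (hskew : ∀ i j, i < j → (A i ∩ B j).Nonempty) :
    h ≤ (m + 2) * (m + 1) / 2 := by
  set S := univ.biUnion fun i => A i ∪ B i
  obtain ⟨t, ht⟩ := S.exists_injOn_of_charZero ℚ
  choose p q _ hpq using fun i => card_eq_two.mp (hA i)
  have hABS : ∀ i, A i ∪ B i ⊆ S := fun i =>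
    subset_biUnion_of_mem (fun i => A i ∪ B i) (mem_univ i)
  set P := fun j => ∏ y ∈ B j, (X - C (t y))
  have hpair : ∀ i j,
      (P j).eval (t (p i)) * (P j).eval (t (q i)) = 0 ↔ (A i ∩ B j).Nonempty := by
    intro i j
    have hBS := subset_union_right.trans (hABS j)
    have hp : p i ∈ S := hABS i (mem_union_left _ (by simp [hpq]))
    have hq : q i ∈ S := hABS i (mem_union_left _ (by simp [hpq]))
    rw [mul_eq_zero, eval_prod_X_sub_C_eq_zero_iff_of_injOn ht hBS hp,
      eval_prod_X_sub_C_eq_zero_iff_of_injOn ht hBS hq, hpq]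
    simp [Finset.Nonempty]
  have hbound := card_le_choose_two_of_eval_mul_eval_triangular (m := m) (t ∘ p) (t ∘ q) P
    (fun j => by simp [P, hB j]) (fun i j hij => (hpair i j).mpr (hskew i j hij))
    (fun i hi => by simpa [hdisj i] using (hpair i i).mp hi)
  simpa [Nat.choose_two_right] using hbound
end

section
/- Let N_1,...,N_ℓ be subsets of a finite set V and fix an index i. Suppose that for every subset Y ⊆ N_i with |Y| = j there exists a 2-element subset p ⊆ N_i \ Y with p ⊄ N_r for all r ≠ i. Then one can greedily construct j+1 pairs p^{(0)},...,p^{(j)}, each a 2-subset of N_i private to N_i, together with chosen elements g^{(s)} ∈ p^{(s)} such that g^{(0)},...,g^{(j)} are pairwise distinct and p^{(s)} ∩ {g^{(0)},...,g^{(s-1)}} = ∅ for all s. -/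
/-!
Each step only forbids the anchors chosen so far: they form a subset of `N i` of size `s ≤ j`,
because an anchor lies in its own pair but in no later pair, which also makes the anchors
distinct. The hypothesis therefore yields a fresh private pair avoiding them, and any of its
two elements serves as the next anchor.
-/

namespace Finset

variable {α : Type*}

def IsAnchoredChain {n : ℕ} (P : Finset α → Prop) (p : Fin n → Finset α) (g : Fin n → α) :
    Prop :=
  (∀ s, P (p s) ∧ g s ∈ p s) ∧ ∀ s s', s' < s → g s' ∉ p s

namespace IsAnchoredChain

variable {n : ℕ} {P : Finset α → Prop} {p : Fin n → Finset α} {g : Fin n → α}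

theorem injective (h : IsAnchoredChain P p g) : Function.Injective g := by
  intro a b hab
  by_contra hne
  rcases lt_or_gt_of_ne hne with hlt | hlt
  · exact h.2 b a hlt (hab ▸ (h.1 b).2)
  · exact h.2 a b hlt (hab ▸ (h.1 a).2)

theorem snoc (h : IsAnchoredChain P p g) {p' : Finset α} {g' : α} (hp' : P p') (hg' : g' ∈ p')
    (hfresh : ∀ s, g s ∉ p') :
    IsAnchoredChain P (Fin.snoc p p' : Fin (n + 1) → Finset α)
      (Fin.snoc g g' : Fin (n + 1) → α) := by
  refine ⟨fun s => ?_, fun s s' hlt => ?_⟩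
  · induction s using Fin.lastCases with
    | last => simpa using ⟨hp', hg'⟩
    | cast t => simpa using h.1 t
  · obtain ⟨t', rfl⟩ : ∃ t', Fin.castSucc t' = s' :=
      Fin.exists_castSucc_eq.mpr (Fin.ne_last_of_lt hlt)
    induction s using Fin.lastCases with
    | last => simpa using hfresh t'
    | cast t => simpa using h.2 t t' (Fin.castSucc_lt_castSucc_iff.mp hlt)

end IsAnchoredChain

theorem exists_isAnchoredChain [DecidableEq α] {P : Finset α → Prop} (S : Finset α)
    (hP : ∀ q, P q → q ⊆ S ∧ q.Nonempty) :
    ∀ n : ℕ, (∀ Y ⊆ S, Y.card < n → ∃ q, P q ∧ Disjoint q Y) →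
      ∃ (p : Fin n → Finset α) (g : Fin n → α), IsAnchoredChain P p g
  | 0, _ => ⟨Fin.elim0, Fin.elim0, fun s => s.elim0, fun s => s.elim0⟩
  | n + 1, hstep => by
    obtain ⟨p, g, h⟩ := exists_isAnchoredChain S hP n fun Y hY hcard => hstep Y hY (by omega)
    set Y := univ.image g
    have hYS : Y ⊆ S := by
      simp only [Y, image_subset_iff, mem_univ, forall_const]
      exact fun s => (hP _ (h.1 s).1).1 (h.1 s).2
    have hYcard : Y.card = n := by simp [Y, card_image_of_injective _ h.injective]
    obtain ⟨q, hq, hqY⟩ := hstep Y hYS (by omega)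
    obtain ⟨g', hg'⟩ := (hP q hq).2
    exact ⟨_, _, h.snoc hq hg' fun s hs =>
      disjoint_left.mp hqY hs (mem_image_of_mem g (mem_univ s))⟩

end Finset

/-- Greedy selection of private pairs with pairwise distinct anchors. -/
theorem greedy_private_pairs {α : Type*} [DecidableEq α] (ℓ : ℕ)
    (N : Fin ℓ → Finset α) (i : Fin ℓ) (j : ℕ)
    (hstep : ∀ s ≤ j, ∀ Y ⊆ N i, Y.card = s →
      ∃ p ⊆ N i \ Y, p.card = 2 ∧ ∀ r, r ≠ i → ¬ p ⊆ N r) :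
    ∃ (p : Fin (j + 1) → Finset α) (g : Fin (j + 1) → α),
      (∀ s, (p s).card = 2 ∧ p s ⊆ N i ∧ (∀ r, r ≠ i → ¬ p s ⊆ N r) ∧ g s ∈ p s) ∧
      Function.Injective g ∧
      (∀ s s' : Fin (j + 1), s' < s → g s' ∉ p s) := by
  let IsPrivatePair q := q.card = 2 ∧ q ⊆ N i ∧ ∀ r, r ≠ i → ¬ q ⊆ N r
  have hpair : ∀ q, IsPrivatePair q → q ⊆ N i ∧ q.Nonempty :=
    fun q hq => ⟨hq.2.1, Finset.card_pos.mp (by omega)⟩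
  have hfresh : ∀ Y ⊆ N i, Y.card < j + 1 → ∃ q, IsPrivatePair q ∧ Disjoint q Y := by
    intro Y hY hcard
    obtain ⟨q, hqY, hcard, hpriv⟩ := hstep Y.card (by omega) Y hY rfl
    exact ⟨q, ⟨hcard, hqY.trans Finset.sdiff_subset, hpriv⟩, (Finset.subset_sdiff.mp hqY).2⟩
  obtain ⟨p, g, h⟩ := Finset.exists_isAnchoredChain (N i) hpair (j + 1) hfresh
  exact ⟨p, g, fun s => ⟨(h.1 s).1.1, (h.1 s).1.2.1, (h.1 s).1.2.2, (h.1 s).2⟩, h.injective, h.2⟩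
end
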